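/- Assume Hypothesis (⋆). Let p be a prime, (x,y) an arc, E_x = ⟨O_p(G_{x,z}) : z ∈ Δ(x)⟩ and E_y = ⟨O_p(G_{z,y}) : z ∈ Δ(y)⟩. If E_x ≤ G_x^{[1]} and E_y ≤ G_y^{[1]}, then O_p(G_{x,y}) = 1. -/

import Mathlib

open Equiv Subgroup

/-- `N` (a subgroup of `Perm V`) acts transitively on the neighbourhood of `x`. -/
def transOn {V : Type*} (Δ : SimpleGraph V) (N : Subgroup (Equiv.Perm V)) (x : V) : Prop :=
  ∀ u ∈ Δ.neighborSet x, ∀ v ∈ Δ.neighborSet x, ∃ g ∈ N, g u = v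

/-- The permutation group induced by `N` on the neighbourhood of `x` is semiregular. -/
def semiregOn {V : Type*} (Δ : SimpleGraph V) (N : Subgroup (Equiv.Perm V)) (x : V) : Prop :=
  ∀ g ∈ N, (∃ u ∈ Δ.neighborSet x, g u = u) → ∀ v ∈ Δ.neighborSet x, g v = v

/-- The stabiliser `G_x`. -/
def vstab {V : Type*} (G : Subgroup (Equiv.Perm V)) (x : V) : Subgroup (Equiv.Perm V) :=
  G ⊓ MulAction.stabilizer (Equiv.Perm V) x

/-- `G_x^{[i]}`: pointwise stabiliser of the ball of radius `i` around `x`. -/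
def ball {V : Type*} (Δ : SimpleGraph V) (G : Subgroup (Equiv.Perm V)) (x : V) (i : ℕ) :
    Subgroup (Equiv.Perm V) :=
  G ⊓ ⨅ z ∈ {z : V | Δ.dist x z ≤ i}, MulAction.stabilizer (Equiv.Perm V) z

/-- `K` is a normal subgroup of `H` (both subgroups of `Perm V`). -/
def normalIn {V : Type*} (K H : Subgroup (Equiv.Perm V)) : Prop :=
  K ≤ H ∧ ∀ h ∈ H, ∀ k ∈ K, h * k * h⁻¹ ∈ K

/-- `O_p(H)`: the largest normal `p`-subgroup of `H`. -/
def Op {V : Type*} (p : ℕ) (H : Subgroup (Equiv.Perm V)) : Subgroup (Equiv.Perm V) :=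
  sSup {K | normalIn K H ∧ IsPGroup p K}

/-- `E_x = ⟨O_p(G_{x,z}) : z ∈ Δ(x)⟩`. -/
def Ep {V : Type*} (Δ : SimpleGraph V) (G : Subgroup (Equiv.Perm V)) (p : ℕ) (x : V) :
    Subgroup (Equiv.Perm V) :=
  ⨆ z ∈ Δ.neighborSet x, Op p (vstab G x ⊓ vstab G z)

/-- `C_{G_x}(G_x^{[1]})`. -/
def locCent {V : Type*} (Δ : SimpleGraph V) (G : Subgroup (Equiv.Perm V)) (x : V) :
    Subgroup (Equiv.Perm V) :=
  vstab G x ⊓ Subgroup.centralizer ((ball Δ G x 1 : Subgroup (Equiv.Perm V)) : Set (Equiv.Perm V))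

/-- Hypothesis (⋆). -/
def StarHyp {V : Type*} (Δ : SimpleGraph V) (G : Subgroup (Equiv.Perm V)) : Prop :=
  ∀ x : V,
    transOn Δ (vstab G x) x ∧
    (transOn Δ (locCent Δ G x) x ∨ semiregOn Δ (locCent Δ G x) x) ∧
    ∀ p : ℕ, p.Prime → (transOn Δ (Ep Δ G p x) x ∨ semiregOn Δ (Ep Δ G p x) x)

/-- `G` is a group of automorphisms of `Δ`. -/
def isAut {V : Type*} (Δ : SimpleGraph V) (G : Subgroup (Equiv.Perm V)) : Prop :=
  ∀ g ∈ G, ∀ u v : V, Δ.Adj (g u) (g v) ↔ Δ.Adj u v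

/-- `K` is a subnormal subgroup of `H`. -/
def subnormalIn {V : Type*} (K H : Subgroup (Equiv.Perm V)) : Prop :=
  ∃ (n : ℕ) (c : ℕ → Subgroup (Equiv.Perm V)),
    c 0 = K ∧ c n = H ∧ ∀ i < n, normalIn (c i) (c (i + 1))

/-- `K` is quasisimple: perfect and simple modulo its centre. -/
def IsQuasisimple {V : Type*} (K : Subgroup (Equiv.Perm V)) : Prop :=
  commutator ↥K = ⊤ ∧ IsSimpleGroup (↥K ⧸ Subgroup.center ↥K)

/-- `E(H)`: the layer, generated by the components of `H`. -/
def layer {V : Type*} (H : Subgroup (Equiv.Perm V)) : Subgroup (Equiv.Perm V) :=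
  sSup {K | subnormalIn K H ∧ IsQuasisimple K}

/-- `F(H)`: the Fitting subgroup of `H`. -/
def fitting {V : Type*} (H : Subgroup (Equiv.Perm V)) : Subgroup (Equiv.Perm V) :=
  sSup {K | normalIn K H ∧ Group.IsNilpotent ↥K}

/-- `F*(H) = E(H)F(H)`: the generalised Fitting subgroup of `H`. -/
def genFitting {V : Type*} (H : Subgroup (Equiv.Perm V)) : Subgroup (Equiv.Perm V) :=
  layer H ⊔ fitting H

/-!
Local transitivity and connectivity put every vertex in the `G`-orbit of `x` or of `y`, so
`E_w ≤ G_w^{[1]}` holds at every vertex `w`. For an edge `{u, w}`, `O_p(G_u^{[1]})` is normal in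
`G_{u,w}`, hence lies in `O_p(G_{u,w}) ≤ E_w ≤ G_w^{[1]}`, and therefore in `O_p(G_w^{[1]})`.
Starting from `O_p(G_{x,y}) ≤ O_p(G_y^{[1]})` and walking through the connected graph,
`O_p(G_{x,y})` lies in every `G_w^{[1]}`, so it fixes every vertex.
-/

open scoped Pointwise

section NormalPSubgroups

variable {V : Type*} {p : ℕ} {K L H N : Subgroup (Equiv.Perm V)}

lemma normalIn_bot : normalIn ⊥ H :=
  ⟨bot_le, fun _ _ k hk => by simp [(Subgroup.mem_bot).mp hk]⟩

lemma normalIn_refl (H : Subgroup (Equiv.Perm V)) : normalIn H H :=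
  ⟨le_rfl, fun _ hh _ hk => H.mul_mem (H.mul_mem hh hk) (H.inv_mem hh)⟩

lemma normalIn.conj_smul_eq (hKH : normalIn K H) {h : Equiv.Perm V} (hh : h ∈ H) :
    MulAut.conj h • K = K := by
  have conj_le : ∀ h ∈ H, MulAut.conj h • K ≤ K := by
    rintro h hh - ⟨k, hk, rfl⟩
    exact hKH.2 h hh k hk
  refine le_antisymm (conj_le h hh) ?_
  rw [Subgroup.subset_pointwise_smul_iff, ← map_inv]
  exact conj_le h⁻¹ (H.inv_mem hh)

lemma normalIn.of_le (hKH : normalIn K H) (hKN : K ≤ N) (hNH : N ≤ H) : normalIn K N :=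
  ⟨hKN, fun h hh => hKH.2 h (hNH hh)⟩

lemma normalIn.smul {α : Type*} [Group α] [MulDistribMulAction α (Equiv.Perm V)]
    (hKH : normalIn K H) (a : α) : normalIn (a • K) (a • H) := by
  refine ⟨Subgroup.pointwise_smul_le_pointwise_smul_iff.mpr hKH.1, fun h hh k hk => ?_⟩
  rw [Subgroup.mem_pointwise_smul_iff_inv_smul_mem] at hh hk ⊢
  rw [smul_mul', smul_mul', smul_inv']
  exact hKH.2 _ hh _ hk

lemma normalIn.sup (hK : normalIn K H) (hL : normalIn L H) : normalIn (K ⊔ L) H := by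
  refine ⟨sup_le hK.1 hL.1, fun h hh k hk => ?_⟩
  rw [← MulAut.conj_apply, ← MulAut.smul_def, ← hK.conj_smul_eq hh, ← hL.conj_smul_eq hh,
    ← Subgroup.smul_sup]
  exact Subgroup.smul_mem_pointwise_smul _ _ _ hk

lemma isPGroup_sup_of_normalIn (hKH : normalIn K H) (hLH : normalIn L H)
    (hK : IsPGroup p K) (hL : IsPGroup p L) : IsPGroup p (K ⊔ L : Subgroup (Equiv.Perm V)) := by
  refine hK.to_sup_of_normal_right' hL fun k hk => Subgroup.mem_normalizer_iff.mpr fun l => ?_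
  rw [← MulAut.conj_apply, ← MulAut.smul_def, ← Subgroup.smul_mem_pointwise_smul_iff
    (a := MulAut.conj k), hLH.conj_smul_eq (hKH.1 hk)]

lemma Op_le (p : ℕ) (H : Subgroup (Equiv.Perm V)) : Op p H ≤ H :=
  sSup_le fun _ hK => hK.1.1

lemma le_Op (hKH : normalIn K H) (hK : IsPGroup p K) : K ≤ Op p H :=
  le_sSup ⟨hKH, hK⟩

/-- The normal `p`-subgroups of `H` form a directed family, so `O_p(H)` is their union. -/
lemma isPGroup_Op (p : ℕ) (H : Subgroup (Equiv.Perm V)) : IsPGroup p (Op p H) := by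
  let S := {K : Subgroup (Equiv.Perm V) | normalIn K H ∧ IsPGroup p K}
  have hbot : ⊥ ∈ S := ⟨normalIn_bot, IsPGroup.of_bot⟩
  have hdir : DirectedOn (· ≤ ·) S := fun K hK L hL =>
    ⟨K ⊔ L, ⟨hK.1.sup hL.1, isPGroup_sup_of_normalIn hK.1 hL.1 hK.2 hL.2⟩,
      le_sup_left, le_sup_right⟩
  rintro ⟨k, hk⟩
  obtain ⟨K, hK, hkK⟩ := (Subgroup.mem_sSup_of_directedOn ⟨⊥, hbot⟩ hdir).mp hk
  obtain ⟨n, hn⟩ := hK.2 ⟨k, hkK⟩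
  exact ⟨n, by simpa [Subtype.ext_iff] using hn⟩

lemma smul_Op {α : Type*} [Group α] [MulDistribMulAction α (Equiv.Perm V)] (a : α) (p : ℕ)
    (H : Subgroup (Equiv.Perm V)) : a • Op p H = Op p (a • H) := by
  have smul_le : ∀ (a : α) (H : Subgroup (Equiv.Perm V)), a • Op p H ≤ Op p (a • H) := by
    intro a H
    rw [Subgroup.pointwise_smul_subset_iff]
    refine sSup_le fun K hK => ?_
    rw [← Subgroup.pointwise_smul_subset_iff]
    exact le_Op (hK.1.smul a) (hK.2.of_equiv (Subgroup.equivSMul a K))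
  refine le_antisymm (smul_le a H) ?_
  rw [Subgroup.subset_pointwise_smul_iff]
  simpa using smul_le a⁻¹ (a • H)

lemma normalIn.Op (hNH : normalIn N H) (p : ℕ) : normalIn (Op p N) H := by
  refine ⟨(Op_le p N).trans hNH.1, fun h hh k hk => ?_⟩
  rw [← MulAut.conj_apply, ← MulAut.smul_def, ← hNH.conj_smul_eq hh, ← smul_Op]
  exact Subgroup.smul_mem_pointwise_smul _ _ _ hk

end NormalPSubgroups

lemma SimpleGraph.Connected.forall_of_adj {V : Type*} {Δ : SimpleGraph V} (hconn : Δ.Connected)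
    {P : V → Prop} {v : V} (hv : P v) (hadj : ∀ u w, Δ.Adj u w → P u → P w) (w : V) : P w := by
  obtain ⟨walk⟩ := hconn.preconnected v w
  induction walk with
  | nil => exact hv
  | cons h _ ih => exact ih (hadj _ _ h hv)

section Graph

variable {V : Type*} {Δ : SimpleGraph V} {G : Subgroup (Equiv.Perm V)}

lemma mem_vstab {k : Equiv.Perm V} {x : V} : k ∈ vstab G x ↔ k ∈ G ∧ k x = x := by
  simp [vstab, MulAction.mem_stabilizer_iff, Equiv.Perm.smul_def]

lemma mem_ball_one_iff_of_connected (hconn : Δ.Connected) {k : Equiv.Perm V} {x : V} :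
    k ∈ ball Δ G x 1 ↔ k ∈ G ∧ k x = x ∧ ∀ z, Δ.Adj x z → k z = z := by
  have dist_le_one : ∀ z, Δ.dist x z ≤ 1 ↔ z = x ∨ Δ.Adj x z := fun z => by
    rw [Nat.le_one_iff_eq_zero_or_eq_one, hconn.dist_eq_zero_iff,
      SimpleGraph.dist_eq_one_iff_adj, eq_comm]
  simp only [ball, Subgroup.mem_inf, Subgroup.mem_iInf, MulAction.mem_stabilizer_iff,
    Set.mem_ofPred_eq, Equiv.Perm.smul_def, dist_le_one, or_imp, forall_and, forall_eq]

lemma ball_one_le_vstab (hconn : Δ.Connected) (x : V) : ball Δ G x 1 ≤ vstab G x :=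
  fun k hk => by
    obtain ⟨hkG, hkx, -⟩ := (mem_ball_one_iff_of_connected hconn).mp hk
    exact mem_vstab.mpr ⟨hkG, hkx⟩

lemma ball_one_le_vstab_of_adj (hconn : Δ.Connected) {x z : V} (hxz : Δ.Adj x z) :
    ball Δ G x 1 ≤ vstab G z := fun k hk => by
  obtain ⟨hkG, -, hkN⟩ := (mem_ball_one_iff_of_connected hconn).mp hk
  exact mem_vstab.mpr ⟨hkG, hkN z hxz⟩

lemma conj_smul_eq_of_forall_conj_smul_le {F : V → Subgroup (Equiv.Perm V)}
    (hF : ∀ g ∈ G, ∀ x, MulAut.conj g • F x ≤ F (g x)) {g : Equiv.Perm V} (hg : g ∈ G) (x : V) :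
    MulAut.conj g • F x = F (g x) := by
  refine le_antisymm (hF g hg x) ?_
  rw [Subgroup.subset_pointwise_smul_iff, ← map_inv]
  simpa using hF g⁻¹ (G.inv_mem hg) (g x)

lemma conj_smul_vstab {g : Equiv.Perm V} (hg : g ∈ G) (x : V) :
    MulAut.conj g • vstab G x = vstab G (g x) := by
  refine conj_smul_eq_of_forall_conj_smul_le (fun g hg x => ?_) hg x
  rintro - ⟨k, hk, rfl⟩
  obtain ⟨hkG, hkx⟩ := mem_vstab.mp hk
  refine mem_vstab.mpr ⟨G.mul_mem (G.mul_mem hg hkG) (G.inv_mem hg), ?_⟩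
  simp [hkx]

lemma conj_smul_ball_one_le (hconn : Δ.Connected) (hG : isAut Δ G) {g : Equiv.Perm V}
    (hg : g ∈ G) (x : V) : MulAut.conj g • ball Δ G x 1 ≤ ball Δ G (g x) 1 := by
  rintro - ⟨k, hk, rfl⟩
  obtain ⟨hkG, hkx, hkN⟩ := (mem_ball_one_iff_of_connected hconn).mp hk
  refine (mem_ball_one_iff_of_connected hconn).mpr
    ⟨G.mul_mem (G.mul_mem hg hkG) (G.inv_mem hg), ?_, ?_⟩
  · simp [hkx]
  · intro z hz
    have hz' : Δ.Adj x (g⁻¹ z) := by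
      rw [← hG g hg]
      simpa using hz
    change (g * k * g⁻¹) z = z
    rw [Equiv.Perm.mul_apply, Equiv.Perm.mul_apply, hkN _ hz']
    simp

lemma normalIn_ball_one_vstab (hconn : Δ.Connected) (hG : isAut Δ G) (x : V) :
    normalIn (ball Δ G x 1) (vstab G x) := by
  refine ⟨ball_one_le_vstab hconn x, fun h hh k hk => ?_⟩
  obtain ⟨hhG, hhx⟩ := mem_vstab.mp hh
  simpa [hhx] using conj_smul_ball_one_le hconn hG hhG x ⟨k, hk, rfl⟩

lemma Op_vstab_inf_le_Ep {p : ℕ} {x z : V} (hxz : Δ.Adj x z) :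
    Op p (vstab G x ⊓ vstab G z) ≤ Ep Δ G p x :=
  le_iSup₂ (f := fun w (_ : w ∈ Δ.neighborSet x) => Op p (vstab G x ⊓ vstab G w)) z hxz

lemma conj_smul_Ep (hG : isAut Δ G) (p : ℕ) {g : Equiv.Perm V} (hg : g ∈ G) (x : V) :
    MulAut.conj g • Ep Δ G p x = Ep Δ G p (g x) := by
  refine conj_smul_eq_of_forall_conj_smul_le (fun g hg x => ?_) hg x
  rw [Subgroup.pointwise_smul_subset_iff]
  refine iSup₂_le fun z hz => ?_
  rw [← Subgroup.pointwise_smul_subset_iff, smul_Op, Subgroup.smul_inf, conj_smul_vstab hg,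
    conj_smul_vstab hg]
  exact Op_vstab_inf_le_Ep ((hG g hg x z).mpr hz)

lemma Ep_le_ball_one_apply (hconn : Δ.Connected) (hG : isAut Δ G) {p : ℕ} {g : Equiv.Perm V}
    (hg : g ∈ G) {v : V} (hv : Ep Δ G p v ≤ ball Δ G v 1) :
    Ep Δ G p (g v) ≤ ball Δ G (g v) 1 := by
  rw [← conj_smul_Ep hG p hg]
  exact (Subgroup.pointwise_smul_le_pointwise_smul_iff.mpr hv).trans
    (conj_smul_ball_one_le hconn hG hg v)

lemma exists_apply_eq_of_adj (hG : isAut Δ G) {v u : V} (hvu : Δ.Adj v u)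
    (htrans : transOn Δ (vstab G v) v) {g : Equiv.Perm V} (hg : g ∈ G) {b : V}
    (hb : Δ.Adj (g v) b) : ∃ g' ∈ G, g' u = b := by
  have hb' : Δ.Adj v (g⁻¹ b) := by
    rw [← hG g hg]
    simpa using hb
  obtain ⟨h, hh, hhu⟩ := htrans u hvu (g⁻¹ b) hb'
  exact ⟨g * h, G.mul_mem hg (mem_vstab.mp hh).1, by simp [hhu]⟩

lemma exists_apply_eq_or_apply_eq (hconn : Δ.Connected) (hG : isAut Δ G)
    (hloc : ∀ v, transOn Δ (vstab G v) v) {x y : V} (hxy : Δ.Adj x y) (w : V) :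
    ∃ g ∈ G, g x = w ∨ g y = w := by
  refine hconn.forall_of_adj (P := fun w => ∃ g ∈ G, g x = w ∨ g y = w)
    ⟨1, G.one_mem, Or.inl rfl⟩ ?_ w
  rintro - b hb ⟨g, hg, rfl | rfl⟩
  · obtain ⟨g', hg', rfl⟩ := exists_apply_eq_of_adj hG hxy (hloc x) hg hb
    exact ⟨g', hg', Or.inr rfl⟩
  · obtain ⟨g', hg', rfl⟩ := exists_apply_eq_of_adj hG hxy.symm (hloc y) hg hb
    exact ⟨g', hg', Or.inl rfl⟩

lemma Op_vstab_inf_le_Op_ball_one (hconn : Δ.Connected) {p : ℕ} {u w : V} (huw : Δ.Adj u w)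
    (hw : Ep Δ G p w ≤ ball Δ G w 1) : Op p (vstab G u ⊓ vstab G w) ≤ Op p (ball Δ G w 1) := by
  have hball : ball Δ G w 1 ≤ vstab G u ⊓ vstab G w :=
    le_inf (ball_one_le_vstab_of_adj hconn huw.symm) (ball_one_le_vstab hconn w)
  have hOp : Op p (vstab G u ⊓ vstab G w) ≤ ball Δ G w 1 :=
    (inf_comm (vstab G u) _ ▸ Op_vstab_inf_le_Ep huw.symm).trans hw
  exact le_Op (((normalIn_refl _).Op p).of_le hOp hball) (isPGroup_Op p _)

lemma Op_ball_one_le_Op_ball_one (hconn : Δ.Connected) (hG : isAut Δ G) {p : ℕ} {u w : V}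
    (huw : Δ.Adj u w) (hw : Ep Δ G p w ≤ ball Δ G w 1) :
    Op p (ball Δ G u 1) ≤ Op p (ball Δ G w 1) := by
  have hball : ball Δ G u 1 ≤ vstab G u ⊓ vstab G w :=
    le_inf (ball_one_le_vstab hconn u) (ball_one_le_vstab_of_adj hconn huw)
  have hnormal : normalIn (Op p (ball Δ G u 1)) (vstab G u ⊓ vstab G w) :=
    ((normalIn_ball_one_vstab hconn hG u).Op p).of_le ((Op_le p _).trans hball) inf_le_left
  exact (le_Op hnormal (isPGroup_Op p _)).trans (Op_vstab_inf_le_Op_ball_one hconn huw hw)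

end Graph

theorem stmt7_general {V : Type*} (Δ : SimpleGraph V) (G : Subgroup (Equiv.Perm V))
    (hconn : Δ.Connected) (hG : isAut Δ G) (hstar : StarHyp Δ G)
    (p : ℕ) {x y : V} (hxy : Δ.Adj x y)
    (hEx : Ep Δ G p x ≤ ball Δ G x 1) (hEy : Ep Δ G p y ≤ ball Δ G y 1) :
    Op p (vstab G x ⊓ vstab G y) = ⊥ := by
  have hEp : ∀ w, Ep Δ G p w ≤ ball Δ G w 1 := fun w => by
    obtain ⟨g, hg, rfl | rfl⟩ := exists_apply_eq_or_apply_eq hconn hG (fun v => (hstar v).1) hxy w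
    · exact Ep_le_ball_one_apply hconn hG hg hEx
    · exact Ep_le_ball_one_apply hconn hG hg hEy
  have hOp : ∀ w, Op p (vstab G x ⊓ vstab G y) ≤ Op p (ball Δ G w 1) :=
    hconn.forall_of_adj (Op_vstab_inf_le_Op_ball_one hconn hxy (hEp y))
      fun u w huw hu => hu.trans (Op_ball_one_le_Op_ball_one hconn hG huw (hEp w))
  refine (Subgroup.eq_bot_iff_forall _).mpr fun k hk => Equiv.ext fun w => ?_
  exact ((mem_ball_one_iff_of_connected hconn).mp (Op_le p _ (hOp w hk))).2.1

theorem stmt7 {V : Type*} [Fintype V] (Δ : SimpleGraph V) (G : Subgroup (Equiv.Perm V))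
    (hconn : Δ.Connected) (hG : isAut Δ G) (hstar : StarHyp Δ G)
    (p : ℕ) (hp : p.Prime) {x y : V} (hxy : Δ.Adj x y)
    (hEx : Ep Δ G p x ≤ ball Δ G x 1) (hEy : Ep Δ G p y ≤ ball Δ G y 1) :
    Op p (vstab G x ⊓ vstab G y) = ⊥ :=
  stmt7_general Δ G hconn hG hstar p hxy hEx hEy
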